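/- arXiv:1711.04280 — 2 statements merged into one kernel-verified Lean document; each statement's English description precedes it below -/
import Mathlib

section
/- Let X_1,...,X_N be i.i.d. nonnegative random variables whose common CDF F satisfies F(γ)/F(γ/L) = O(1) as γ → 0⁺ (i.e., limsup_{γ→0} F(γ)/F(γ/L) < ∞). Then limsup_{γ→0} F(γ)^N / P(∑_{k=1}^L X^{(k)} ≤ γ) < ∞. -/
open MeasureTheory ProbabilityTheory Filter Set Topology

noncomputable section

/-- The `k`-th largest value (0-indexed) among `x 0, ..., x (N-1)`. -/
def ordDesc {N : ℕ} (x : Fin N → ℝ) (k : Fin N) : ℝ := (x ∘ Tuple.sort x) k.rev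

/-- Sum of the `L` largest values among `x 0, ..., x (N-1)`. -/
def topSum {N : ℕ} (L : ℕ) (x : Fin N → ℝ) : ℝ :=
  ∑ k ∈ Finset.univ.filter (fun k : Fin N => (k : ℕ) < L), ordDesc x k

/-!
If every `X i` is at most `γ / L`, then so is each of the `L` largest values, hence their sum is
at most `γ`. By independence this gives `P(∑_{k ≤ L} X^{(k)} ≤ γ) ≥ F(γ/L)^N`, so the ratio in
question is at most `(F(γ) / F(γ/L))^N`, whose limsup is the `N`-th power of a finite one.
-/

lemma topSum_le_mul {N L : ℕ} (hLN : L ≤ N) {x : Fin N → ℝ} {c : ℝ} (h : ∀ i, x i ≤ c) :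
    topSum L x ≤ L * c := by
  calc topSum L x ≤ ∑ _k ∈ Finset.univ.filter (fun k : Fin N => (k : ℕ) < L), c :=
        Finset.sum_le_sum fun k _ => h _
    _ = L * c := by rw [Finset.sum_const, Fin.card_filter_val_lt, min_eq_right hLN, nsmul_eq_mul]

lemma measure_forall_le_eq_pow {ι Ω : Type*} [Fintype ι] [MeasurableSpace Ω] {μ : Measure Ω}
    {X : ι → Ω → ℝ} (hindep : iIndepFun X μ) {i₀ : ι}
    (hident : ∀ i, IdentDistrib (X i) (X i₀) μ μ) (c : ℝ) :
    μ {ω | ∀ i, X i ω ≤ c} = μ {ω | X i₀ ω ≤ c} ^ Fintype.card ι := by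
  calc μ {ω | ∀ i, X i ω ≤ c} = μ (⋂ i, X i ⁻¹' Iic c) := by congr 1; ext; simp
    _ = ∏ i, μ (X i ⁻¹' Iic c) :=
        hindep.meas_iInter fun i => ⟨Iic c, measurableSet_Iic, rfl⟩
    _ = ∏ _i : ι, μ (X i₀ ⁻¹' Iic c) :=
        Finset.prod_congr rfl fun i _ => (hident i).measure_mem_eq measurableSet_Iic
    _ = μ {ω | X i₀ ω ≤ c} ^ Fintype.card ι := by rw [Finset.prod_const]; rfl

lemma ENNReal.div_pow (a b : ENNReal) (n : ℕ) : (a / b) ^ n = a ^ n / b ^ n := by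
  rw [div_eq_mul_inv, div_eq_mul_inv, mul_pow, ENNReal.inv_pow]

lemma ENNReal.limsup_pow {α : Type*} (l : Filter α) [l.NeBot] (f : α → ENNReal) (n : ℕ) :
    limsup (fun x => f x ^ n) l = limsup f l ^ n :=
  ((pow_left_mono n).map_limsup_of_continuousAt f (ENNReal.continuous_pow n).continuousAt).symm

theorem stmt2 {Ω : Type*} [MeasurableSpace Ω] (μ : Measure Ω) [IsProbabilityMeasure μ]
    (N L : ℕ) (hL1 : 1 ≤ L) (hLN : L ≤ N)
    (X : Fin N → Ω → ℝ)
    (hindep : iIndepFun X μ)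
    (hident : ∀ i j, IdentDistrib (X i) (X j) μ μ)
    -- F(γ)/F(γ/L) = O(1) as γ → 0⁺, with F the common CDF
    (hO : Filter.limsup
        (fun γ : ℝ => μ {ω | X ⟨0, by omega⟩ ω ≤ γ} / μ {ω | X ⟨0, by omega⟩ ω ≤ γ / (L : ℝ)})
        (𝓝[>] (0:ℝ)) < ⊤) :
    Filter.limsup
        (fun γ : ℝ => (μ {ω | X ⟨0, by omega⟩ ω ≤ γ}) ^ N /
          μ {ω | topSum L (fun i => X i ω) ≤ γ})
        (𝓝[>] (0:ℝ)) < ⊤ := by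
  set F : ℝ → ENNReal := fun c => μ {ω | X ⟨0, by omega⟩ ω ≤ c}
  have hL : (L : ℝ) ≠ 0 := Nat.cast_ne_zero.mpr (by omega)
  have hlower (γ : ℝ) : F (γ / L) ^ N ≤ μ {ω | topSum L (fun i => X i ω) ≤ γ} := by
    calc F (γ / L) ^ N = μ {ω | ∀ i, X i ω ≤ γ / L} := by
          rw [measure_forall_le_eq_pow hindep fun i => hident i _, Fintype.card_fin]
      _ ≤ _ := measure_mono fun ω hω => by
          simpa [mul_div_cancel₀ _ hL] using topSum_le_mul hLN hω
  have hratio (γ : ℝ) :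
      F γ ^ N / μ {ω | topSum L (fun i => X i ω) ≤ γ} ≤ (F γ / F (γ / L)) ^ N := by
    rw [ENNReal.div_pow]
    exact ENNReal.div_le_div_left (hlower γ) _
  calc limsup (fun γ => F γ ^ N / μ {ω | topSum L (fun i => X i ω) ≤ γ}) (𝓝[>] 0)
      ≤ limsup (fun γ => (F γ / F (γ / L)) ^ N) (𝓝[>] 0) :=
        limsup_le_limsup (Eventually.of_forall hratio)
    _ = limsup (fun γ => F γ / F (γ / L)) (𝓝[>] 0) ^ N := ENNReal.limsup_pow _ _ _
    _ < ⊤ := ENNReal.pow_lt_top hO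
end
end

section
/- Pareto case bounded relative error (Proposition 2): let Y_1,...,Y_N be i.i.d. exponential with mean 1, X_i = exp(Y_i/α) − 1 (i.e., X_i Pareto(α)), ℓ(γ) = P(∑_{k=1}^L X^{(k)} ≤ γ) and ℓ_1(γ) = P(∑_{k=1}^L Y^{(k)} ≤ αL·log(1+γ/L)). Then limsup_{γ→0⁺} ℓ_1(γ)/ℓ(γ) ≤ L^N < ∞. -/
/-!
Write `d = α log (1 + γ / L)` and `t = e^{-d}`. Since the `Y_i` are a.s. nonnegative, the sum
of the `L` largest `Y_i` dominates every `Y_i`, so `ℓ₁(γ) ≤ P(max Y_i ≤ L d) = (1 - t^L)^N`.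
Conversely, if every `Y_i ≤ d` then every `X_i ≤ γ / L`, so `ℓ(γ) ≥ (1 - t)^N`. The ratio is
therefore at most `(1 + t + ⋯ + t^{L-1})^N`, which tends to `L^N` as `γ → 0⁺`, i.e. `t → 1`.
-/

open MeasureTheory ProbabilityTheory Filter Set Topology

noncomputable section

section OrderStatistics

variable {N L : ℕ} {x : Fin N → ℝ}

lemma le_ordDesc_zero (x : Fin N → ℝ) (j : Fin N) : x j ≤ ordDesc x ⟨0, j.pos⟩ := by
  have hj : x j = (x ∘ Tuple.sort x) ((Tuple.sort x).symm j) := by simp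
  rw [hj, ordDesc]
  refine Tuple.monotone_sort x ?_
  simp only [Fin.le_def, Fin.val_rev]
  omega

lemma le_topSum_of_nonneg (hL : 0 < L) (hx : ∀ i, 0 ≤ x i) (j : Fin N) : x j ≤ topSum L x :=
  (le_ordDesc_zero x j).trans <|
    Finset.single_le_sum (f := ordDesc x) (fun _ _ => hx _) (by simp [hL])

lemma topSum_le_mul_s6 {b : ℝ} (hb : 0 ≤ b) (hx : ∀ i, x i ≤ b) : topSum L x ≤ L * b := by
  calc topSum L x ≤ (Finset.univ.filter (fun k : Fin N => (k : ℕ) < L)).card • b :=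
        Finset.sum_le_card_nsmul _ _ _ fun _ _ => hx _
    _ ≤ L * b := by
        rw [Fin.card_filter_val_lt, nsmul_eq_mul]
        gcongr
        exact_mod_cast min_le_right N L

end OrderStatistics

lemma expMeasure_Iic {r x : ℝ} (hr : 0 < r) (hx : 0 ≤ x) :
    expMeasure r (Iic x) = ENNReal.ofReal (1 - Real.exp (-(r * x))) := by
  rw [expMeasure, gammaMeasure, withDensity_apply _ measurableSet_Iic]
  exact (lintegral_exponentialPDF_eq_antiDeriv hr x).trans (by rw [if_pos hx])

lemma expMeasure_Iio_zero {r : ℝ} (hr : 0 < r) : expMeasure r (Iio 0) = 0 :=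
  measure_mono_null Iio_subset_Iic_self (by simp [expMeasure_Iic hr le_rfl])

lemma expMeasure_Iic_natCast_mul_pow_div {r d : ℝ} (hr : 0 < r) (hd : 0 < d) (n N : ℕ) :
    expMeasure r (Iic (n * d)) ^ N / expMeasure r (Iic d) ^ N =
      ENNReal.ofReal ((∑ j ∈ Finset.range n, Real.exp (-(r * d)) ^ j) ^ N) := by
  have ht : Real.exp (-(r * d)) < 1 := Real.exp_lt_one_iff.2 (by nlinarith)
  have hpow : Real.exp (-(r * (n * d))) = Real.exp (-(r * d)) ^ n := by
    rw [← Real.exp_nat_mul]; ring_nf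
  rw [expMeasure_Iic hr (by positivity), expMeasure_Iic hr hd.le, hpow, ← mul_neg_geom_sum,
    ← ENNReal.ofReal_pow (by positivity), ← ENNReal.ofReal_pow (by linarith),
    ← ENNReal.ofReal_div_of_pos (by apply pow_pos; linarith), ← div_pow,
    mul_div_cancel_left₀ _ (by linarith)]

lemma measure_iInter_preimage_eq_pow {Ω ι β : Type*} [MeasurableSpace Ω] [MeasurableSpace β]
    [Fintype ι] {μ : Measure Ω} {ν : Measure β} {Y : ι → Ω → β} (hYm : ∀ i, Measurable (Y i))
    (hYindep : iIndepFun Y μ) (hYlaw : ∀ i, μ.map (Y i) = ν) {s : Set β} (hs : MeasurableSet s) :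
    μ (⋂ i, Y i ⁻¹' s) = ν s ^ Fintype.card ι := by
  rw [hYindep.meas_iInter fun i => ⟨s, hs, rfl⟩]
  simp [← Measure.map_apply (hYm _) hs, hYlaw]

lemma ae_nonneg_of_map_eq_expMeasure {Ω : Type*} [MeasurableSpace Ω] {μ : Measure Ω}
    {Y : Ω → ℝ} {r : ℝ} (hr : 0 < r) (hYm : Measurable Y) (hYlaw : μ.map Y = expMeasure r) :
    ∀ᵐ ω ∂μ, 0 ≤ Y ω :=
  ae_of_ae_map hYm.aemeasurable <|
    hYlaw ▸ ae_iff.2 (by simp only [not_le]; exact expMeasure_Iio_zero hr)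

lemma exp_div_sub_one_le {α y s : ℝ} (hα : 0 < α) (hs : 0 < 1 + s)
    (h : y ≤ α * Real.log (1 + s)) : Real.exp (y / α) - 1 ≤ s := by
  have : y / α ≤ Real.log (1 + s) := by rwa [div_le_iff₀' hα]
  linarith [(Real.le_log_iff_exp_le hs).1 this]

lemma tendsto_ofReal_geom_sum_exp_log_pow (α c : ℝ) (n N : ℕ) :
    Tendsto (fun γ => ENNReal.ofReal
        ((∑ j ∈ Finset.range n, Real.exp (-(α * Real.log (1 + γ / c))) ^ j) ^ N))
      (𝓝 0) (𝓝 ((n : ENNReal) ^ N)) := by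
  have : ContinuousAt (fun γ =>
      (∑ j ∈ Finset.range n, Real.exp (-(α * Real.log (1 + γ / c))) ^ j) ^ N) 0 := by
    fun_prop (disch := norm_num)
  simpa [ENNReal.ofReal_pow, Function.comp_def] using
    (ENNReal.continuous_ofReal.tendsto _).comp this.tendsto

section ExponentialSample

variable {Ω : Type*} [MeasurableSpace Ω] {μ : Measure Ω} {N L : ℕ} {Y : Fin N → Ω → ℝ}

lemma measure_topSum_le_le_pow {r : ℝ} (hr : 0 < r) (hL : 0 < L) (hYm : ∀ i, Measurable (Y i))
    (hYindep : iIndepFun Y μ) (hYlaw : ∀ i, μ.map (Y i) = expMeasure r) (c : ℝ) :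
    μ {ω | topSum L (fun i => Y i ω) ≤ c} ≤ expMeasure r (Iic c) ^ N := by
  have hnonneg : ∀ᵐ ω ∂μ, ∀ i, 0 ≤ Y i ω :=
    ae_all_iff.2 fun i => ae_nonneg_of_map_eq_expMeasure hr (hYm i) (hYlaw i)
  calc μ {ω | topSum L (fun i => Y i ω) ≤ c} ≤ μ (⋂ i, Y i ⁻¹' Iic c) :=
        measure_mono_ae <| hnonneg.mono fun ω hω hc =>
          mem_iInter.2 fun j => (le_topSum_of_nonneg hL hω j).trans hc
    _ = expMeasure r (Iic c) ^ N := by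
        simpa using measure_iInter_preimage_eq_pow hYm hYindep hYlaw measurableSet_Iic

lemma pow_le_measure_topSum_exp_div_sub_one_le {ν : Measure ℝ} {α γ : ℝ} (hα : 0 < α)
    (hγ : 0 < γ) (hL : 0 < L) (hYm : ∀ i, Measurable (Y i)) (hYindep : iIndepFun Y μ)
    (hYlaw : ∀ i, μ.map (Y i) = ν) :
    ν (Iic (α * Real.log (1 + γ / L))) ^ N ≤
      μ {ω | topSum L (fun i => Real.exp (Y i ω / α) - 1) ≤ γ} := by
  have hL' : (0 : ℝ) < L := Nat.cast_pos.2 hL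
  calc ν (Iic (α * Real.log (1 + γ / L))) ^ N
        = μ (⋂ i, Y i ⁻¹' Iic (α * Real.log (1 + γ / L))) := by
        simpa using (measure_iInter_preimage_eq_pow hYm hYindep hYlaw measurableSet_Iic).symm
    _ ≤ _ := measure_mono fun ω hω => by
        have := topSum_le_mul_s6 (L := L) (div_pos hγ hL').le fun i =>
          exp_div_sub_one_le hα (by positivity) (mem_iInter.1 hω i)
        rwa [mul_div_cancel₀ _ hL'.ne'] at this

lemma measure_topSum_le_div_measure_topSum_le {α γ : ℝ} (hL : 0 < L) (hα : 0 < α)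
    (hYm : ∀ i, Measurable (Y i)) (hYindep : iIndepFun Y μ)
    (hYlaw : ∀ i, μ.map (Y i) = expMeasure 1) (hγ : 0 < γ) :
    μ {ω | topSum L (fun i => Y i ω) ≤ α * L * Real.log (1 + γ / L)} /
        μ {ω | topSum L (fun i => Real.exp (Y i ω / α) - 1) ≤ γ} ≤
      ENNReal.ofReal ((∑ j ∈ Finset.range L, Real.exp (-(α * Real.log (1 + γ / L))) ^ j) ^ N) := by
  have hd : 0 < α * Real.log (1 + γ / L) :=
    mul_pos hα (Real.log_pos (by linarith [div_pos hγ (Nat.cast_pos.2 hL : (0 : ℝ) < L)]))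
  calc _ ≤ expMeasure 1 (Iic (L * (α * Real.log (1 + γ / L)))) ^ N /
        expMeasure 1 (Iic (α * Real.log (1 + γ / L))) ^ N := by
        refine ENNReal.div_le_div ?_ (pow_le_measure_topSum_exp_div_sub_one_le hα hγ hL hYm
          hYindep hYlaw)
        convert measure_topSum_le_le_pow one_pos hL hYm hYindep hYlaw _ using 4
        ring
    _ = _ := by simpa using expMeasure_Iic_natCast_mul_pow_div one_pos hd L N

end ExponentialSample

theorem stmt6_general {Ω : Type*} [MeasurableSpace Ω] (μ : Measure Ω)
    (N L : ℕ) (hL1 : 1 ≤ L) (α : ℝ) (hα : 0 < α)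
    (Y : Fin N → Ω → ℝ) (hYm : ∀ i, Measurable (Y i))
    (hYindep : iIndepFun Y μ)
    (hYlaw : ∀ i, μ.map (Y i) = expMeasure 1) :
    Filter.limsup (fun γ : ℝ =>
        -- ℓ₁(γ) = P(∑_{k=1}^L Y^{(k)} ≤ αL·log(1+γ/L))
        μ {ω | topSum L (fun i => Y i ω) ≤ α * L * Real.log (1 + γ / (L : ℝ))} /
        -- ℓ(γ) = P(∑_{k=1}^L X^{(k)} ≤ γ) with X_i = exp(Y_i/α) − 1 Pareto(α)
        μ {ω | topSum L (fun i => Real.exp (Y i ω / α) - 1) ≤ γ})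
      (𝓝[>] (0:ℝ)) ≤ (L : ENNReal) ^ N := by
  calc Filter.limsup _ (𝓝[>] (0:ℝ))
      ≤ Filter.limsup (fun γ : ℝ => ENNReal.ofReal
          ((∑ j ∈ Finset.range L, Real.exp (-(α * Real.log (1 + γ / L))) ^ j) ^ N))
        (𝓝[>] (0:ℝ)) :=
        limsup_le_limsup <| eventually_nhdsWithin_of_forall fun _ hγ =>
          measure_topSum_le_div_measure_topSum_le hL1 hα hYm hYindep hYlaw hγ
    _ = (L : ENNReal) ^ N :=
        ((tendsto_ofReal_geom_sum_exp_log_pow α L L N).mono_left nhdsWithin_le_nhds).limsup_eq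

/-- Bounded relative error of the IS estimator in the Pareto case (Proposition 2). -/
theorem stmt6 {Ω : Type*} [MeasurableSpace Ω] (μ : Measure Ω) [IsProbabilityMeasure μ]
    (N L : ℕ) (hL1 : 1 ≤ L) (hLN : L ≤ N) (α : ℝ) (hα : 0 < α)
    (Y : Fin N → Ω → ℝ) (hYm : ∀ i, Measurable (Y i))
    (hYindep : iIndepFun Y μ)
    (hYlaw : ∀ i, μ.map (Y i) = expMeasure 1) :
    Filter.limsup (fun γ : ℝ =>
        -- ℓ₁(γ) = P(∑_{k=1}^L Y^{(k)} ≤ αL·log(1+γ/L))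
        μ {ω | topSum L (fun i => Y i ω) ≤ α * L * Real.log (1 + γ / (L : ℝ))} /
        -- ℓ(γ) = P(∑_{k=1}^L X^{(k)} ≤ γ) with X_i = exp(Y_i/α) − 1 Pareto(α)
        μ {ω | topSum L (fun i => Real.exp (Y i ω / α) - 1) ≤ γ})
      (𝓝[>] (0:ℝ)) ≤ (L : ENNReal) ^ N :=
  stmt6_general μ N L hL1 α hα Y hYm hYindep hYlaw
end
end
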